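/- (Uniqueness of the wall-crossing coefficients for B_n.) Let β'^b_a ∈ K for 0 ≤ a < b ≤ 2n be arbitrary, and let B' be the K-linear endomorphism defined exactly as B except that on the subspace with a + c = 2n one sets B' e_{(a,2n−a)} = c_a e_{(2n−a,a)} + Σ_{b=a+1}^{2n} β'^b_a e_{(2n−b,b)} (with the same c_a, and with B' = B on all e_{(a,c)} with a + c ≠ 2n). Then B' is invertible; and if B' satisfies the skein relation B'^{bd}_{ac} − (B'⁻¹)^{bd}_{ac} = (u² − u⁻²)·(M_{ac}·M_{bd} − δ_a^b δ_c^d) for all a, b, c, d ∈ I, then for all 0 ≤ a < b ≤ 2n: β'^b_a = (u² − u⁻²)u^{2(b−a)} if (a−n)(b−n) > 0, β'^b_a = (u² − u⁻²)u^{2(b−a)−1} if (a−n)(b−n) = 0, and β'^b_a = (u² − u⁻²)u^{2(b−a)−2} + δ_{a,2n−b}(u⁻² − u²) if (a−n)(b−n) < 0. -/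

import Mathlib

noncomputable section

/-- The coefficient field `K = ℚ(u)`, the field of rational functions in `u`
over `ℚ` (`u` plays the role of `q^{1/4}`, `q = u⁴`). -/
abbrev FK : Type := RatFunc ℚ

/-- The variable `u` of `K = ℚ(u)`. -/
def U : FK := RatFunc.X

/-- The fusion matrix `M` of the fundamental `(2n+1)`-dimensional representation
of `B_n`: `M_{a,b} = 0` if `b ≠ 2n - a`, and `M_{a,2n-a} = u^{2(n-a)-1}` for
`a < n`, `M_{n,n} = 1`, `M_{a,2n-a} = u^{2(n-a)+1}` for `a > n`. -/
def MB (n a b : ℕ) : FK :=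
  if a + b = 2 * n then
    if a < n then U ^ (2 * ((n : ℤ) - a) - 1)
    else if a = n then 1
    else U ^ (2 * ((n : ℤ) - a) + 1)
  else 0

/-- The leading coefficients `c_a` of the braiding on the `a + c = 2n` block:
`c_n = 1` and `c_a = u²` for `a ≠ n`. -/
def cB (n a : ℕ) : FK := if a = n then 1 else U ^ (2 : ℤ)

/-- The wall-crossing coefficients `β_a^b` (`a < b`) of the braiding matrix
of `B_n`. -/
def betaB (n a b : ℕ) : FK :=
  if 0 < ((a : ℤ) - n) * ((b : ℤ) - n) then
    (U ^ (2 : ℤ) - U ^ (-2 : ℤ)) * U ^ (2 * ((b : ℤ) - a))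
  else if ((a : ℤ) - n) * ((b : ℤ) - n) = 0 then
    (U ^ (2 : ℤ) - U ^ (-2 : ℤ)) * U ^ (2 * ((b : ℤ) - a) - 1)
  else
    (U ^ (2 : ℤ) - U ^ (-2 : ℤ)) * U ^ (2 * ((b : ℤ) - a) - 2) +
      (if a + b = 2 * n then U ^ (-2 : ℤ) - U ^ (2 : ℤ) else 0)

/-- Coefficients of the braiding matrix of `B_n`:
`BB n b d a c = B^{bd}_{ac}`, the coefficient of `e_{(b,d)}` in `B e_{(a,c)}`.
For `a + c ≠ 2n`: `B e_{(a,c)} = u⁻² e_{(a,c)}` if `a = c`,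
`B e_{(a,c)} = e_{(c,a)}` if `a > c`, and
`B e_{(a,c)} = e_{(c,a)} + (u⁻² - u²) e_{(a,c)}` if `a < c`.
For `a + c = 2n`: `B e_{(a,2n-a)} = c_a e_{(2n-a,a)} + Σ_{b=a+1}^{2n} β_a^b e_{(2n-b,b)}`. -/
def BB (n b d a c : ℕ) : FK :=
  if a + c = 2 * n then
    if b + d = 2 * n then
      if d = a then cB n a else if a < d then betaB n a d else 0
    else 0
  else if a = c then (if b = a ∧ d = c then U ^ (-2 : ℤ) else 0)
  else if c < a then (if b = c ∧ d = a then 1 else 0)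
  else (if b = c ∧ d = a then (1 : FK) else 0) +
    (if b = a ∧ d = c then U ^ (-2 : ℤ) - U ^ (2 : ℤ) else 0)

/-- The braiding matrix `B` of `B_n` as a matrix indexed by pairs `(a, c)`,
with `BmatB n (b, d) (a, c) = B^{bd}_{ac}`. -/
def BmatB (n : ℕ) :
    Matrix (Fin (2 * n + 1) × Fin (2 * n + 1)) (Fin (2 * n + 1) × Fin (2 * n + 1)) FK :=
  Matrix.of fun p q => BB n p.1 p.2 q.1 q.2

/-- The matrix of the braiding `B` of `B_n` on its invariant subspace with
basis `{e_{(a, 2n-a)} : 0 ≤ a ≤ 2n}`. -/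
def NB (n : ℕ) : Matrix (Fin (2 * n + 1)) (Fin (2 * n + 1)) FK :=
  Matrix.of fun b a => BB n b (2 * n - (b : ℕ)) a (2 * n - (a : ℕ))


/-- The modified braiding matrix coefficients `B'^{bd}_{ac}`, defined exactly as
those of `B`, except that on the `a + c = 2n` subspace the wall-crossing
coefficients are replaced by arbitrary `β'`. -/
def BB' (n : ℕ) (β' : ℕ → ℕ → FK) (b d a c : ℕ) : FK :=
  if a + c = 2 * n then
    if b + d = 2 * n then
      if d = a then cB n a else if a < d then β' a d else 0
    else 0
  else if a = c then (if b = a ∧ d = c then U ^ (-2 : ℤ) else 0)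
  else if c < a then (if b = c ∧ d = a then 1 else 0)
  else (if b = c ∧ d = a then (1 : FK) else 0) +
    (if b = a ∧ d = c then U ^ (-2 : ℤ) - U ^ (2 : ℤ) else 0)

/-- The modified braiding matrix `B'`. -/
def BmatB' (n : ℕ) (β' : ℕ → ℕ → FK) :
    Matrix (Fin (2 * n + 1) × Fin (2 * n + 1)) (Fin (2 * n + 1) × Fin (2 * n + 1)) FK :=
  Matrix.of fun p q => BB' n β' p.1 p.2 q.1 q.2


/-!
Composing `B'` with the flip `e_(b,d) ↦ e_(d,b)` yields a matrix that is lower triangular for the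
lexicographic order on index pairs: off the antidiagonal `e_(a,c)` goes to `e_(a,c)` plus a
multiple of `e_(c,a)` with `c > a`, and on it the new terms `e_(b,2n-b)` have `b > a`. The diagonal
entries `c_a`, `u⁻²`, `1` are nonzero, so `B'` is invertible and the flipped inverse is lower
triangular too. In particular `(B'⁻¹)^{2n-b, b}_{a, 2n-a} = 0` for `a < b`, so the skein relation
at that entry reads `β'^b_a = (u² - u⁻²)(M_{a,2n-a} M_{2n-b,b} - δ_{a,2n-b})`, and
`M_{a,2n-a} M_{2n-b,b} = u^{2(b-a) - 1 + sgn((a-n)(b-n))}` gives the three cases.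
-/

namespace Matrix

variable {m R : Type*} [Fintype m] [LinearOrder m] [CommRing R] {A : Matrix m m R}

theorem IsLowerTriangular.isUnit (hA : A.IsLowerTriangular) (hdiag : ∀ i, IsUnit (A i i)) :
    IsUnit A := by
  rw [isUnit_iff_isUnit_det, det_of_isLowerTriangular A hA]
  exact IsUnit.prod_univ_iff.mpr hdiag

theorem IsLowerTriangular.inv (hA : A.IsLowerTriangular) : A⁻¹.IsLowerTriangular := by
  by_cases h : IsUnit A.det
  · have := invertibleOfIsUnitDet A h
    exact blockTriangular_inv_of_blockTriangular hA
  · rw [nonsing_inv_apply_not_isUnit A h]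
    exact blockTriangular_zero

end Matrix

open Matrix

theorem U_ne_zero : U ≠ 0 := RatFunc.X_ne_zero

section FlippedBraiding

variable (n : ℕ) (β' : ℕ → ℕ → FK)

abbrev BasisPair (n : ℕ) : Type := Fin (2 * n + 1) × Fin (2 * n + 1)

def lexFlip : Lex (BasisPair n) ≃ BasisPair n := toLex.symm.trans (Equiv.prodComm _ _)

def flipBraiding : Matrix (Lex (BasisPair n)) (Lex (BasisPair n)) FK :=
  (BmatB' n β').submatrix (lexFlip n) toLex.symm

theorem flipBraiding_apply (p q : BasisPair n) :
    flipBraiding n β' (toLex p) (toLex q) = BB' n β' p.2 p.1 q.1 q.2 :=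
  rfl

theorem flipBraiding_isLowerTriangular : (flipBraiding n β').IsLowerTriangular := by
  intro p q hpq
  obtain ⟨p, rfl⟩ := toLex.surjective p
  obtain ⟨q, rfl⟩ := toLex.surjective q
  rw [flipBraiding_apply]
  simp only [OrderDual.toDual_lt_toDual, Prod.Lex.toLex_lt_toLex, Fin.lt_def, Fin.ext_iff] at hpq
  unfold BB'
  split_ifs <;> first | omega | simp

theorem flipBraiding_diag_ne_zero (p : BasisPair n) :
    flipBraiding n β' (toLex p) (toLex p) ≠ 0 := by
  rw [flipBraiding_apply]
  unfold BB' cB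
  split_ifs <;> first | omega | simp [U_ne_zero]

theorem isUnit_BmatB' : IsUnit (BmatB' n β') := by
  rw [← isUnit_submatrix_equiv (lexFlip n) toLex.symm]
  exact (flipBraiding_isLowerTriangular n β').isUnit fun p =>
    isUnit_iff_ne_zero.mpr (flipBraiding_diag_ne_zero n β' p)

theorem BmatB'_inv_apply_eq_zero {p q : BasisPair n} (h : toLex p < toLex q.swap) :
    (BmatB' n β')⁻¹ p q = 0 := by
  have := (flipBraiding_isLowerTriangular n β').inv h
  rwa [flipBraiding, inv_submatrix_equiv] at this

theorem BB'_antidiag {a b : ℕ} (hab : a < b) (hb : b ≤ 2 * n) :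
    BB' n β' (2 * n - b) b a (2 * n - a) = β' a b := by
  rw [BB', if_pos (by omega), if_pos (by omega), if_neg (by omega), if_pos hab]

end FlippedBraiding

section FusionMatrix

variable (n : ℕ)

theorem MB_antidiag {a : ℕ} (ha : a ≤ 2 * n) :
    MB n a (2 * n - a) = U ^ (2 * ((n : ℤ) - a) - Int.sign ((n : ℤ) - a)) := by
  rw [MB, if_pos (by omega)]
  rcases lt_trichotomy a n with h | rfl | h
  · rw [if_pos h, Int.sign_eq_one_of_pos (by omega)]
  · simp
  · rw [if_neg (by omega), if_neg (by omega), Int.sign_eq_neg_one_of_neg (by omega),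
      sub_neg_eq_add]

theorem MB_mul_MB_antidiag {a b : ℕ} (hab : a < b) (hb : b ≤ 2 * n) :
    MB n a (2 * n - a) * MB n (2 * n - b) b =
      U ^ (2 * ((b : ℤ) - a) - 1 + Int.sign (((a : ℤ) - n) * ((b : ℤ) - n))) := by
  have hMb := MB_antidiag n (a := 2 * n - b) (by omega)
  rw [show 2 * n - (2 * n - b) = b by omega] at hMb
  rw [MB_antidiag n (by omega), hMb, ← zpow_add₀ U_ne_zero, Int.sign_mul]
  congr 1
  have hsign : Int.sign ((a : ℤ) - n) = -1 ∨ Int.sign ((b : ℤ) - n) = 1 := by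
    rcases lt_or_ge a n with h | h
    · exact .inl (Int.sign_eq_neg_one_of_neg (by omega))
    · exact .inr (Int.sign_eq_one_of_pos (by omega))
  have hna : Int.sign ((n : ℤ) - a) = -Int.sign ((a : ℤ) - n) := by
    rw [← Int.sign_neg, neg_sub]
  push_cast [Nat.cast_sub hb]
  rw [hna, show (n : ℤ) - (2 * n - b) = b - n by ring]
  rcases hsign with h | h <;> rw [h] <;> ring

theorem skein_antidiag_eq_betaB {a b : ℕ} (hab : a < b) (hb : b ≤ 2 * n) :
    (U ^ (2 : ℤ) - U ^ (-2 : ℤ)) *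
      (MB n a (2 * n - a) * MB n (2 * n - b) b - if a + b = 2 * n then 1 else 0) =
      betaB n a b := by
  have hdelta : a + b = 2 * n → ((a : ℤ) - n) * ((b : ℤ) - n) < 0 := fun h => by
    rw [show (a : ℤ) - n = -((b : ℤ) - n) by omega, neg_mul, neg_neg_iff_pos]
    exact mul_self_pos.mpr (by omega)
  rw [MB_mul_MB_antidiag n hab hb, betaB]
  rcases lt_trichotomy 0 (((a : ℤ) - n) * ((b : ℤ) - n)) with hs | hs | hs
  · rw [if_pos hs, Int.sign_eq_one_of_pos hs, if_neg fun h => lt_asymm hs (hdelta h)]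
    ring_nf
  · rw [if_neg hs.not_lt, if_pos hs.symm, ← hs, Int.sign_zero,
      if_neg fun h => (hdelta h).ne hs.symm]
    ring_nf
  · rw [if_neg (not_lt.mpr hs.le), if_neg hs.ne, Int.sign_eq_neg_one_of_neg hs]
    split_ifs <;> ring_nf

end FusionMatrix

theorem stmt19_general (n : ℕ) (β' : ℕ → ℕ → FK) :
    IsUnit (BmatB' n β') ∧
    ((∀ a b c d : Fin (2 * n + 1),
        BmatB' n β' (b, d) (a, c) - (BmatB' n β')⁻¹ (b, d) (a, c) =
          (U ^ (2 : ℤ) - U ^ (-2 : ℤ)) *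
            (MB n a c * MB n b d -
              (if a = b then (1 : FK) else 0) * (if c = d then (1 : FK) else 0))) →
      ∀ a b : ℕ, a < b → b ≤ 2 * n →
        β' a b =
          if 0 < ((a : ℤ) - n) * ((b : ℤ) - n) then
            (U ^ (2 : ℤ) - U ^ (-2 : ℤ)) * U ^ (2 * ((b : ℤ) - a))
          else if ((a : ℤ) - n) * ((b : ℤ) - n) = 0 then
            (U ^ (2 : ℤ) - U ^ (-2 : ℤ)) * U ^ (2 * ((b : ℤ) - a) - 1)
          else
            (U ^ (2 : ℤ) - U ^ (-2 : ℤ)) * U ^ (2 * ((b : ℤ) - a) - 2) +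
              (if a + b = 2 * n then U ^ (-2 : ℤ) - U ^ (2 : ℤ) else 0)) := by
  refine ⟨isUnit_BmatB' n β', fun hskein a b hab hb => ?_⟩
  have h := hskein ⟨a, by omega⟩ ⟨2 * n - b, by omega⟩ ⟨2 * n - a, by omega⟩ ⟨b, by omega⟩
  rw [BmatB'_inv_apply_eq_zero n β' (Prod.Lex.toLex_lt_toLex.mpr (.inl (Fin.mk_lt_mk.mpr
    (show 2 * n - b < 2 * n - a by omega)))), sub_zero] at h
  have hδ : (2 * n - a = b ↔ a + b = 2 * n) ∧ (a = 2 * n - b ↔ a + b = 2 * n) := by omega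
  simp only [BmatB', of_apply, BB'_antidiag n β' hab hb, Fin.mk.injEq, hδ,
    ite_zero_mul_ite_zero, and_self, mul_one] at h
  rw [h, skein_antidiag_eq_betaB n hab hb, betaB]

/-- Uniqueness of the wall-crossing coefficients for `B_n`: for arbitrary `β'`
the modified braiding `B'` is invertible, and if `B'` satisfies the skein
relation `B'^{bd}_{ac} - (B'⁻¹)^{bd}_{ac} = (u² - u⁻²)(M_{ac} M_{bd} - δ_a^b δ_c^d)`,
then the `β'^b_a` (`0 ≤ a < b ≤ 2n`) are given by the formulas defining `betaB`:
`β'^b_a = (u² - u⁻²)u^{2(b-a)}` if `(a-n)(b-n) > 0`,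
`β'^b_a = (u² - u⁻²)u^{2(b-a)-1}` if `(a-n)(b-n) = 0`, and
`β'^b_a = (u² - u⁻²)u^{2(b-a)-2} + δ_{a,2n-b}(u⁻² - u²)` if `(a-n)(b-n) < 0`. -/
theorem stmt19 (n : ℕ) (hn : 1 ≤ n) (β' : ℕ → ℕ → FK) :
    IsUnit (BmatB' n β') ∧
    ((∀ a b c d : Fin (2 * n + 1),
        BmatB' n β' (b, d) (a, c) - (BmatB' n β')⁻¹ (b, d) (a, c) =
          (U ^ (2 : ℤ) - U ^ (-2 : ℤ)) *
            (MB n a c * MB n b d -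
              (if a = b then (1 : FK) else 0) * (if c = d then (1 : FK) else 0))) →
      ∀ a b : ℕ, a < b → b ≤ 2 * n →
        β' a b =
          if 0 < ((a : ℤ) - n) * ((b : ℤ) - n) then
            (U ^ (2 : ℤ) - U ^ (-2 : ℤ)) * U ^ (2 * ((b : ℤ) - a))
          else if ((a : ℤ) - n) * ((b : ℤ) - n) = 0 then
            (U ^ (2 : ℤ) - U ^ (-2 : ℤ)) * U ^ (2 * ((b : ℤ) - a) - 1)
          else
            (U ^ (2 : ℤ) - U ^ (-2 : ℤ)) * U ^ (2 * ((b : ℤ) - a) - 2) +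
              (if a + b = 2 * n then U ^ (-2 : ℤ) - U ^ (2 : ℤ) else 0)) :=
  stmt19_general n β'

end
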